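/- Let g be a matrix over ℚ_p indexed by Fin α ⊕ Fin N₁ with blocks a,b,c,d, let h be a matrix indexed by Fin α ⊕ Fin N₂ with blocks p,q,r,t, and let R be a lattice in Fin 2 → ℚ_p. Then χ_{g∘h}(R) = χ_g(R) · χ_h(R), where for subsets S, T of (Fin α → ℚ_p) × (Fin α → ℚ_p) the product of relations is S · T := {(u, w) : ∃ v : Fin α → ℚ_p, (u, v) ∈ S ∧ (v, w) ∈ T}, and g∘h is the ∘-product of colligations. -/

import Mathlib

open Matrix

/-- A lattice in a finite-dimensional `ℚ_[p]`-vector space: a subset which is closed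
under addition and under multiplication by scalars from `ℤ_[p]` (coerced into `ℚ_[p]`),
is compact, and whose `ℚ_[p]`-linear span is the whole space. -/
def IsLattice (p : ℕ) [Fact p.Prime] {V : Type*} [AddCommGroup V] [Module ℚ_[p] V]
    [TopologicalSpace V] (R : Set V) : Prop :=
  (∀ x ∈ R, ∀ y ∈ R, x + y ∈ R) ∧
  (∀ (c : ℤ_[p]), ∀ x ∈ R, ((c : ℚ_[p]) • x) ∈ R) ∧
  IsCompact R ∧
  Submodule.span ℚ_[p] R = ⊤

variable {p : ℕ} [Fact p.Prime]

/-- `R ⊗ 𝕆^N`: the `ℤ_[p]`-submodule of `(Fin N → ℚ_[p]) × (Fin N → ℚ_[p])` spanned by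
the vectors `(r 0 • v, r 1 • v)` with `r ∈ R` and `v` having all coordinates in `ℤ_[p]`. -/
noncomputable def tensO {N : ℕ} (R : Set (Fin 2 → ℚ_[p])) :
    Submodule ℤ_[p] ((Fin N → ℚ_[p]) × (Fin N → ℚ_[p])) :=
  Submodule.span ℤ_[p]
    {w | ∃ r ∈ R, ∃ v : Fin N → ℚ_[p], (∀ i, ‖v i‖ ≤ 1) ∧ w = (r 0 • v, r 1 • v)}

/-- The lattice-valued characteristic function `χ_g(R)` of a colligation `g` over `ℚ_[p]`. -/
def chiLat {α N : ℕ} (g : Matrix (Fin α ⊕ Fin N) (Fin α ⊕ Fin N) ℚ_[p])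
    (R : Set (Fin 2 → ℚ_[p])) : Set ((Fin α → ℚ_[p]) × (Fin α → ℚ_[p])) :=
  {qp | ∃ x y : Fin N → ℚ_[p], (y, x) ∈ tensO (p := p) R ∧
    qp.1 = g.toBlocks₁₁.mulVec qp.2 + g.toBlocks₁₂.mulVec x ∧
    y = g.toBlocks₂₁.mulVec qp.2 + g.toBlocks₂₂.mulVec x}

/-- The ∘-product of two colligations. -/
noncomputable def collProd {α N₁ N₂ : ℕ}
    (g : Matrix (Fin α ⊕ Fin N₁) (Fin α ⊕ Fin N₁) ℚ_[p])
    (h : Matrix (Fin α ⊕ Fin N₂) (Fin α ⊕ Fin N₂) ℚ_[p]) :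
    Matrix (Fin α ⊕ (Fin N₁ ⊕ Fin N₂)) (Fin α ⊕ (Fin N₁ ⊕ Fin N₂)) ℚ_[p] :=
  Matrix.fromBlocks
    (g.toBlocks₁₁ * h.toBlocks₁₁)
    (Matrix.fromCols g.toBlocks₁₂ (g.toBlocks₁₁ * h.toBlocks₁₂))
    (Matrix.fromRows (g.toBlocks₂₁ * h.toBlocks₁₁) h.toBlocks₂₁)
    (Matrix.fromBlocks g.toBlocks₂₂ (g.toBlocks₂₁ * h.toBlocks₁₂) 0 h.toBlocks₂₂)

/-- Transporting `tensO` membership along a suitable `ℤ_[p]`-linear map. -/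
lemma tensO_map_mem {N M : ℕ} {R : Set (Fin 2 → ℚ_[p])}
    (T : (Fin N → ℚ_[p]) →ₗ[ℤ_[p]] (Fin M → ℚ_[p]))
    (hT : ∀ (c : ℚ_[p]) (v : Fin N → ℚ_[p]), T (c • v) = c • T v)
    (hO : ∀ v : Fin N → ℚ_[p], (∀ i, ‖v i‖ ≤ 1) → ∀ i, ‖T v i‖ ≤ 1)
    {y x : Fin N → ℚ_[p]} (h : (y, x) ∈ tensO (p := p) R) :
    (T y, T x) ∈ tensO (p := p) R := by
  have hle : tensO (p := p) (N := N) R ≤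
      (tensO (p := p) (N := M) R).comap (T.prodMap T) := by
    rw [tensO, Submodule.span_le]
    rintro w ⟨r, hr, v, hv, rfl⟩
    refine Submodule.subset_span ⟨r, hr, T v, hO v hv, ?_⟩
    simp [hT]
  exact hle h

/-- Restriction along any map of index sets preserves `tensO` membership. -/
lemma tensO_comp_mem {N M : ℕ} {R : Set (Fin 2 → ℚ_[p])} (f : Fin M → Fin N)
    {y x : Fin N → ℚ_[p]} (h : (y, x) ∈ tensO (p := p) R) :
    (y ∘ f, x ∘ f) ∈ tensO (p := p) R :=
  tensO_map_mem (LinearMap.funLeft ℤ_[p] ℚ_[p] f) (fun _ _ => rfl) (fun v hv i => hv (f i)) h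

/-- Extension by zero on the right. -/
noncomputable def padL (N₁ N₂ : ℕ) :
    (Fin N₁ → ℚ_[p]) →ₗ[ℤ_[p]] (Fin (N₁ + N₂) → ℚ_[p]) where
  toFun y := Sum.elim y 0 ∘ ⇑finSumFinEquiv.symm
  map_add' y z := by
    funext j
    simp only [Function.comp_apply, Pi.add_apply]
    cases finSumFinEquiv.symm j <;> simp
  map_smul' m y := by
    funext j
    simp only [Function.comp_apply, RingHom.id_apply, Pi.smul_apply]
    cases finSumFinEquiv.symm j <;> simp

/-- Extension by zero on the left. -/
noncomputable def padR (N₁ N₂ : ℕ) :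
    (Fin N₂ → ℚ_[p]) →ₗ[ℤ_[p]] (Fin (N₁ + N₂) → ℚ_[p]) where
  toFun y := Sum.elim 0 y ∘ ⇑finSumFinEquiv.symm
  map_add' y z := by
    funext j
    simp only [Function.comp_apply, Pi.add_apply]
    cases finSumFinEquiv.symm j <;> simp
  map_smul' m y := by
    funext j
    simp only [Function.comp_apply, RingHom.id_apply, Pi.smul_apply]
    cases finSumFinEquiv.symm j <;> simp

lemma elim_eq_pad {N₁ N₂ : ℕ} (y₁ : Fin N₁ → ℚ_[p]) (y₂ : Fin N₂ → ℚ_[p]) :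
    Sum.elim y₁ y₂ ∘ ⇑finSumFinEquiv.symm = padL N₁ N₂ y₁ + padR N₁ N₂ y₂ := by
  funext j
  simp only [padL, padR, LinearMap.coe_mk, AddHom.coe_mk, Pi.add_apply, Function.comp_apply]
  cases finSumFinEquiv.symm j <;> simp

lemma tensO_elim_mem {N₁ N₂ : ℕ} {R : Set (Fin 2 → ℚ_[p])}
    {y₁ x₁ : Fin N₁ → ℚ_[p]} {y₂ x₂ : Fin N₂ → ℚ_[p]}
    (h₁ : (y₁, x₁) ∈ tensO (p := p) R) (h₂ : (y₂, x₂) ∈ tensO (p := p) R) :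
    (Sum.elim y₁ y₂ ∘ ⇑(finSumFinEquiv (m := N₁) (n := N₂)).symm,
     Sum.elim x₁ x₂ ∘ ⇑finSumFinEquiv.symm) ∈ tensO (p := p) R := by
  have m₁ : (padL N₁ N₂ y₁, padL N₁ N₂ x₁) ∈ tensO (p := p) R := by
    refine tensO_map_mem (padL N₁ N₂) (fun c v => ?_) (fun v hv i => ?_) h₁
    · funext j
      simp only [padL, LinearMap.coe_mk, AddHom.coe_mk, Pi.smul_apply, Function.comp_apply]
      cases finSumFinEquiv.symm j <;> simp
    · simp only [padL, LinearMap.coe_mk, AddHom.coe_mk, Function.comp_apply]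
      cases finSumFinEquiv.symm i with
      | inl k => exact hv k
      | inr k => simp
  have m₂ : (padR N₁ N₂ y₂, padR N₁ N₂ x₂) ∈ tensO (p := p) R := by
    refine tensO_map_mem (padR N₁ N₂) (fun c v => ?_) (fun v hv i => ?_) h₂
    · funext j
      simp only [padR, LinearMap.coe_mk, AddHom.coe_mk, Pi.smul_apply, Function.comp_apply]
      cases finSumFinEquiv.symm j <;> simp
    · simp only [padR, LinearMap.coe_mk, AddHom.coe_mk, Function.comp_apply]
      cases finSumFinEquiv.symm i with
      | inl k => simp
      | inr k => exact hv k
  rw [elim_eq_pad, elim_eq_pad]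
  exact (tensO (p := p) R).add_mem m₁ m₂

/-- `χ_{g∘h}(R) = χ_g(R) · χ_h(R)`, where `·` is the product of relations. -/
theorem chiLat_collProd {α N₁ N₂ : ℕ}
    (g : Matrix (Fin α ⊕ Fin N₁) (Fin α ⊕ Fin N₁) ℚ_[p])
    (h : Matrix (Fin α ⊕ Fin N₂) (Fin α ⊕ Fin N₂) ℚ_[p])
    (R : Set (Fin 2 → ℚ_[p])) (hR : IsLattice p R) :
    chiLat (Matrix.reindex
        (Equiv.sumCongr (Equiv.refl (Fin α)) finSumFinEquiv)
        (Equiv.sumCongr (Equiv.refl (Fin α)) finSumFinEquiv)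
        (collProd g h)) R
      = {uw | ∃ v : Fin α → ℚ_[p], (uw.1, v) ∈ chiLat g R ∧ (v, uw.2) ∈ chiLat h R} := by
  classical
  set e : Fin N₁ ⊕ Fin N₂ ≃ Fin (N₁ + N₂) := finSumFinEquiv with he
  set G := Matrix.reindex
      (Equiv.sumCongr (Equiv.refl (Fin α)) e)
      (Equiv.sumCongr (Equiv.refl (Fin α)) e)
      (collProd g h) with hGdef
  set a := g.toBlocks₁₁ with ha
  set b := g.toBlocks₁₂ with hb
  set c := g.toBlocks₂₁ with hc
  set d := g.toBlocks₂₂ with hd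
  set P := h.toBlocks₁₁ with hP
  set Q := h.toBlocks₁₂ with hQ
  set r := h.toBlocks₂₁ with hr
  set t := h.toBlocks₂₂ with ht
  have hG11 : G.toBlocks₁₁ = a * P := rfl
  have hG12 : G.toBlocks₁₂ = (Matrix.fromCols b (a * Q)).submatrix _root_.id ⇑e.symm := rfl
  have hG21 : G.toBlocks₂₁
      = (Matrix.fromRows (c * P) r).submatrix ⇑e.symm ⇑(Equiv.refl (Fin α)) := rfl
  have hG22 : G.toBlocks₂₂ = (Matrix.fromBlocks d (c * Q) 0 t).submatrix ⇑e.symm ⇑e.symm := rfl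
  have h12 : ∀ x : Fin (N₁ + N₂) → ℚ_[p],
      G.toBlocks₁₂ *ᵥ x = b *ᵥ (x ∘ ⇑e ∘ Sum.inl) + (a * Q) *ᵥ (x ∘ ⇑e ∘ Sum.inr) := by
    intro x
    have hx : x ∘ ⇑e.symm.symm = Sum.elim (x ∘ ⇑e ∘ Sum.inl) (x ∘ ⇑e ∘ Sum.inr) := by
      funext k; cases k <;> rfl
    rw [hG12, Matrix.submatrix_mulVec_equiv, hx, Matrix.fromCols_mulVec_sumElim]
    rfl
  have h21 : ∀ w : Fin α → ℚ_[p],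
      G.toBlocks₂₁ *ᵥ w = Sum.elim ((c * P) *ᵥ w) (r *ᵥ w) ∘ ⇑e.symm := by
    intro w
    rw [hG21, Matrix.submatrix_mulVec_equiv, Matrix.fromRows_mulVec]
    rfl
  have h22 : ∀ x : Fin (N₁ + N₂) → ℚ_[p],
      G.toBlocks₂₂ *ᵥ x
        = Sum.elim (d *ᵥ (x ∘ ⇑e ∘ Sum.inl) + (c * Q) *ᵥ (x ∘ ⇑e ∘ Sum.inr))
            (t *ᵥ (x ∘ ⇑e ∘ Sum.inr)) ∘ ⇑e.symm := by
    intro x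
    have hx : x ∘ ⇑e.symm.symm = Sum.elim (x ∘ ⇑e ∘ Sum.inl) (x ∘ ⇑e ∘ Sum.inr) := by
      funext k; cases k <;> rfl
    rw [hG22, Matrix.submatrix_mulVec_equiv, hx, Matrix.fromBlocks_mulVec]
    simp only [Sum.elim_comp_inl, Sum.elim_comp_inr, Matrix.zero_mulVec, zero_add]
  ext ⟨u, w⟩
  simp only [chiLat, Set.mem_setOf_eq]
  constructor
  · rintro ⟨x, y, hxy, h1, h2⟩
    have hm₁ : (y ∘ ⇑e ∘ Sum.inl, x ∘ ⇑e ∘ Sum.inl) ∈ tensO (p := p) R :=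
      tensO_comp_mem (⇑e ∘ Sum.inl) hxy
    have hm₂ : (y ∘ ⇑e ∘ Sum.inr, x ∘ ⇑e ∘ Sum.inr) ∈ tensO (p := p) R :=
      tensO_comp_mem (⇑e ∘ Sum.inr) hxy
    have hy : y = Sum.elim ((c * P) *ᵥ w) (r *ᵥ w) ∘ ⇑e.symm
        + Sum.elim (d *ᵥ (x ∘ ⇑e ∘ Sum.inl) + (c * Q) *ᵥ (x ∘ ⇑e ∘ Sum.inr))
            (t *ᵥ (x ∘ ⇑e ∘ Sum.inr)) ∘ ⇑e.symm := by
      rw [h2, h21, h22]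
    refine ⟨P *ᵥ w + Q *ᵥ (x ∘ ⇑e ∘ Sum.inr),
      ⟨x ∘ ⇑e ∘ Sum.inl, y ∘ ⇑e ∘ Sum.inl, hm₁, ?_, ?_⟩,
      ⟨x ∘ ⇑e ∘ Sum.inr, y ∘ ⇑e ∘ Sum.inr, hm₂, rfl, ?_⟩⟩
    · rw [h1, hG11, h12]
      simp only [Matrix.mulVec_add, Matrix.mulVec_mulVec]
      abel
    · funext k
      have hk := congrFun hy (e (Sum.inl k))
      simp only [Pi.add_apply, Function.comp_apply, Equiv.symm_apply_apply,
        Sum.elim_inl] at hk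
      simp only [Function.comp_apply, Pi.add_apply, Matrix.mulVec_add,
        Matrix.mulVec_mulVec]
      rw [hk]; ring
    · funext k
      have hk := congrFun hy (e (Sum.inr k))
      simp only [Pi.add_apply, Function.comp_apply, Equiv.symm_apply_apply,
        Sum.elim_inr] at hk
      simp only [Function.comp_apply, Pi.add_apply]
      rw [hk]
  · rintro ⟨v, ⟨x₁, y₁, m₁, e1, e2⟩, ⟨x₂, y₂, m₂, e3, e4⟩⟩
    have hx1 : (Sum.elim x₁ x₂ ∘ ⇑e.symm) ∘ ⇑e ∘ Sum.inl = x₁ := by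
      funext k; simp
    have hx2 : (Sum.elim x₁ x₂ ∘ ⇑e.symm) ∘ ⇑e ∘ Sum.inr = x₂ := by
      funext k; simp
    refine ⟨Sum.elim x₁ x₂ ∘ ⇑e.symm, Sum.elim y₁ y₂ ∘ ⇑e.symm,
      tensO_elim_mem m₁ m₂, ?_, ?_⟩
    · rw [hG11, h12, hx1, hx2, e1, e3]
      simp only [Matrix.mulVec_add, Matrix.mulVec_mulVec]
      abel
    · rw [h21, h22, hx1, hx2]
      funext j
      simp only [Pi.add_apply, Function.comp_apply]
      cases e.symm j with
      | inl k =>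
        simp only [Sum.elim_inl]
        have hk := congrFun e2 k
        simp only [Pi.add_apply] at hk
        rw [hk, e3]
        simp only [Matrix.mulVec_add, Matrix.mulVec_mulVec, Pi.add_apply]
        ring
      | inr k =>
        simp only [Sum.elim_inr]
        have hk := congrFun e4 k
        simp only [Pi.add_apply] at hk
        rw [hk]
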